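/- If the SAℓCA S_ℓ of a transition system S satisfies the time-bounded Reach-While-Avoid specification ψ(X_{ℓ0}, X_{ℓS}, X_{ℓG}, H) on its abstract state space, and the initial, safe, and goal sets of S are aligned with the output map, then S satisfies ψ(X0, X_S, X_G, H). -/

import Mathlib

/-!
Every concrete run yields an `H`-long output behavior `b` of `S`. Sliding an `ℓ`-window along `b`
produces a run of the abstraction (consecutive windows overlap in `ℓ - 1` symbols, which is the
domino rule) whose flattening is `b` again, so `b` is also a behavior of the SAℓCA. The
specification of the abstraction then holds for `b`, and since the safe and goal sets are
aligned with the output map, it transfers to the run.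
-/

/-- A transition system `(X, X0, E, Y, H)`. -/
structure TS (X Y : Type*) where
  init : Set X
  edge : X → X → Prop
  out : X → Y

/-- The set of `H`-long output behaviors of a transition system. -/
def BehH {X Y : Type*} (S : TS X Y) (H : ℕ) : Set (List Y) :=
  {b | ∃ r : ℕ → X, r 0 ∈ S.init ∧ (∀ k, k + 1 < H → S.edge (r k) (r (k + 1))) ∧
        b = (List.range H).map fun k => S.out (r k)}

/-- The set of `ℓ`-long contiguous subsequences of a set of behaviors. -/
def Xell {Y : Type*} (B : Set (List Y)) (ℓ : ℕ) : Set (List Y) :=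
  {σ | σ.length = ℓ ∧ ∃ b ∈ B, σ <:+: b}

/-- The (strongest asynchronous) `ℓ`-complete abstraction built from a behavior set `B`
with initial-output set `Y0`: states are `ℓ`-long subsequences, transitions follow the
domino rule, the output is the first symbol. -/
def AbsTS {Y : Type*} [Inhabited Y] (B : Set (List Y)) (Y0 : Set Y) (ℓ : ℕ) :
    TS (List Y) Y where
  init := {σ | σ ∈ Xell B ℓ ∧ ∃ y ∈ Y0, σ.head? = some y}
  edge := fun σ σ' => σ ∈ Xell B ℓ ∧ σ' ∈ Xell B ℓ ∧ σ.tail = σ'.dropLast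
  out := fun σ => σ.headI

/-- The SAℓCA of a transition system `S` for horizon `H`. -/
def SAlCA {X Y : Type*} [Inhabited Y] (S : TS X Y) (H ℓ : ℕ) : TS (List Y) Y :=
  AbsTS (BehH S H) (S.out '' S.init) ℓ

/-- `H`-long behaviors of the abstraction built from behavior set `B`: a run of
`H - ℓ + 1` abstract states (windows) flattened into `H` output symbols (the heads of
the windows followed by the tail of the last window). -/
def AbsBeh {Y : Type*} [Inhabited Y] (B : Set (List Y)) (Y0 : Set Y) (H ℓ : ℕ) :
    Set (List Y) :=
  {b | ∃ r : ℕ → List Y, r 0 ∈ (AbsTS B Y0 ℓ).init ∧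
        (∀ k, k + 1 ≤ H - ℓ → (AbsTS B Y0 ℓ).edge (r k) (r (k + 1))) ∧
        b = ((List.range (H - ℓ + 1)).map fun k => (r k).headI) ++ (r (H - ℓ)).tail}

/-- `H`-long behaviors of the SAℓCA of `S`. -/
def AbsBehH {X Y : Type*} [Inhabited Y] (S : TS X Y) (H ℓ : ℕ) : Set (List Y) :=
  AbsBeh (BehH S H) (S.out '' S.init) H ℓ

namespace List

variable {α : Type*}

theorem headI_drop [Inhabited α] {l : List α} {k : ℕ} (hk : k < l.length) :
    (l.drop k).headI = l[k] := by
  rw [drop_eq_getElem_cons hk, headI_cons]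

theorem headI_take [Inhabited α] {l : List α} {m : ℕ} (hm : m ≠ 0) :
    (l.take m).headI = l.headI := by
  obtain ⟨m, rfl⟩ := Nat.exists_eq_succ_of_ne_zero hm
  cases l <;> rfl

theorem map_range_headI_drop [Inhabited α] {l : List α} {n : ℕ} (hn : n ≤ l.length) :
    (range n).map (fun k => (l.drop k).headI) = l.take n := by
  refine ext_getElem (by simp [hn]) fun k hk _ => ?_
  simp only [length_map, length_range] at hk
  simp [headI_drop (show k < l.length by omega)]

theorem take_drop_isInfix (l : List α) (m n : ℕ) : (l.drop n).take m <:+: l :=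
  (take_prefix _ _).isInfix.trans (drop_suffix _ _).isInfix

theorem tail_take_drop_eq_dropLast_take_drop {l : List α} {m n : ℕ}
    (h : n + 1 + m ≤ l.length) :
    ((l.drop n).take m).tail = ((l.drop (n + 1)).take m).dropLast := by
  rw [tail_take_eq_take_tail, tail_drop, dropLast_eq_take, take_take, length_take, length_drop]
  congr 1
  omega

end List

section Windows

variable {Y : Type*} {B : Set (List Y)} {b : List Y} {ℓ : ℕ}

theorem take_drop_mem_Xell (hb : b ∈ B) {k : ℕ} (hk : k + ℓ ≤ b.length) :
    (b.drop k).take ℓ ∈ Xell B ℓ :=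
  ⟨by simp; omega, b, hb, b.take_drop_isInfix ℓ k⟩

theorem mem_AbsBeh_of_mem [Inhabited Y] {Y0 : Set Y} {H : ℕ} (hℓ : 0 < ℓ) (hb : b ∈ B)
    (hlen : b.length = H) (hℓH : ℓ ≤ H) (hhead : ∃ y ∈ Y0, b.head? = some y) : b ∈ AbsBeh B Y0 H ℓ := by
  refine ⟨fun k => (b.drop k).take ℓ, ⟨take_drop_mem_Xell hb (by omega), ?_⟩,
    fun k hk => ⟨take_drop_mem_Xell hb (by omega), take_drop_mem_Xell hb (by omega),
      List.tail_take_drop_eq_dropLast_take_drop (by omega)⟩, ?_⟩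
  · simpa [List.head?_take, hℓ.ne'] using hhead
  · simp only [List.headI_take hℓ.ne']
    rw [List.map_range_headI_drop (by omega),
      List.take_of_length_le (l := b.drop (H - ℓ)) (by simp; omega), List.tail_drop,
      List.take_append_drop]

end Windows

theorem stmt3_general {X Y : Type*} [Inhabited Y] (S : TS X Y) (H ℓ : ℕ)
    (h1 : 1 < ℓ) (h2 : ℓ ≤ H)
    (XS XG : Set X) (YS YG : Set Y)
    (hS : ∀ x, S.out x ∈ YS ↔ x ∈ XS)
    (hG : ∀ x, S.out x ∈ YG ↔ x ∈ XG)
    (habs : ∀ b ∈ AbsBehH S H ℓ, ∃ k' < H, (∃ y ∈ YG, b[k']? = some y) ∧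
        ∀ k ≤ k', ∃ y ∈ YS, b[k]? = some y) :
    ∀ r : ℕ → X, r 0 ∈ S.init → (∀ k, S.edge (r k) (r (k + 1))) →
      ∃ k' < H, r k' ∈ XG ∧ ∀ k ≤ k', r k ∈ XS := by
  intro r hr0 hr
  set b := (List.range H).map fun k => S.out (r k)
  have hb_get : ∀ k < H, b[k]? = some (S.out (r k)) := fun k hk => by simp [b, hk]
  have hb : b ∈ AbsBehH S H ℓ :=
    mem_AbsBeh_of_mem (by omega) ⟨r, hr0, fun k _ => hr k, rfl⟩ (by simp [b]) h2
      ⟨S.out (r 0), ⟨r 0, hr0, rfl⟩, by rw [List.head?_eq_getElem?, hb_get 0 (by omega)]⟩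
  obtain ⟨k', hk', ⟨y, hyG, hy⟩, hsafe⟩ := habs b hb
  refine ⟨k', hk', (hG _).1 ?_, fun k hk => (hS _).1 ?_⟩
  · rw [hb_get k' hk', Option.some_inj] at hy
    rwa [hy]
  · obtain ⟨z, hzS, hz⟩ := hsafe k hk
    rw [hb_get k (by omega), Option.some_inj] at hz
    rwa [hz]

/-- if the SAℓCA satisfies the time-bounded Reach-While-Avoid specification
(on output behaviors, the sets being aligned with the output map), then so does `S`. -/
theorem stmt3 {X Y : Type*} [Inhabited Y] (S : TS X Y) (H ℓ : ℕ)
    (h1 : 1 < ℓ) (h2 : ℓ ≤ H)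
    (XS XG : Set X) (YI YS YG : Set Y)
    (hI : ∀ x, S.out x ∈ YI ↔ x ∈ S.init)
    (hS : ∀ x, S.out x ∈ YS ↔ x ∈ XS)
    (hG : ∀ x, S.out x ∈ YG ↔ x ∈ XG)
    (habs : ∀ b ∈ AbsBehH S H ℓ, ∃ k' < H, (∃ y ∈ YG, b[k']? = some y) ∧
        ∀ k ≤ k', ∃ y ∈ YS, b[k]? = some y) :
    ∀ r : ℕ → X, r 0 ∈ S.init → (∀ k, S.edge (r k) (r (k + 1))) →
      ∃ k' < H, r k' ∈ XG ∧ ∀ k ≤ k', r k ∈ XS :=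
  stmt3_general S H ℓ h1 h2 XS XG YS YG hS hG habs
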